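/- Let k_0 > 0, λ_n = k_0·2^n, and define for complex sequences u, v the Sabra shell-model nonlinearity b_n(u,v) = (i/3)λ_{n+1}[conj(v_{n+1})u_{n+2} + 2·conj(u_{n+1})v_{n+2}] + (i/3)λ_n[conj(u_{n-1})v_{n+1} − conj(v_{n-1})u_{n+1}] + (i/3)λ_{n-1}[2u_{n-1}v_{n-2} + u_{n-2}v_{n-1}] (with the convention u_0 = u_{-1} = 0). Then for all non-negative α, β with α + β ∈ (0, 1/2], there exists a constant C > 0 such that ‖B(u,v)‖_{-α} ≤ C‖u‖_{1/2-(α+β)}‖v‖_β for all u ∈ E_{1/2-(α+β)} and v ∈ E_β, where ‖w‖_γ² = Σ_n λ_n^{4γ}|w_n|². -/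
import Mathlib
set_option maxHeartbeats 1000000

open scoped ComplexConjugate

/-- The dyadic wavenumbers `λ_n = k₀ 2^n` of the shell models. -/
noncomputable def shellLam (k0 : ℝ) (n : ℕ) : ℝ := k0 * 2 ^ n

/-- The Sabra shell-model nonlinearity `b_n(u,v)`, with the convention that the
coordinates of index `≤ 0` vanish (encoded via truncated subtraction on `ℕ` together
with the hypothesis `u 0 = v 0 = 0`). -/
noncomputable def sabraB (k0 : ℝ) (u v : ℕ → ℂ) (n : ℕ) : ℂ :=
  (Complex.I / 3) * (shellLam k0 (n + 1)) *
      (conj (v (n + 1)) * u (n + 2) + 2 * conj (u (n + 1)) * v (n + 2))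
    + (Complex.I / 3) * (shellLam k0 n) *
      (conj (u (n - 1)) * v (n + 1) - conj (v (n - 1)) * u (n + 1))
    + (Complex.I / 3) * (shellLam k0 (n - 1)) *
      (2 * u (n - 1) * v (n - 2) + u (n - 2) * v (n - 1))

lemma shellLam_pos {k0 : ℝ} (hk0 : 0 < k0) (n : ℕ) : 0 < shellLam k0 n := by
  unfold shellLam; positivity

/-- Core coefficient bound. -/
lemma coeff_bound {k0 α β γ : ℝ} (hk0 : 0 < k0) (hα : 0 ≤ α)
    (hβ0 : 0 ≤ β) (hβ2 : β ≤ 1/2) (hγ0 : 0 ≤ γ) (hγ2 : γ ≤ 1/2)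
    (hbal : 4*γ + 4*β = 2 - 4*α) (n b c d : ℕ)
    (hb : b ≤ n + 2) (hc : n ≤ c + 1) (hd : n ≤ d + 1) :
    shellLam k0 (n+1) ^ (-(4*α)) * shellLam k0 b ^ 2
      ≤ 1024 * (shellLam k0 c ^ (4*γ) * shellLam k0 d ^ (4*β)) := by
  set L := shellLam k0 (n+1) with hLdef
  have hL : 0 < L := shellLam_pos hk0 _
  have hbL : shellLam k0 b ≤ 2 * L := by
    have h2 : (2:ℝ) ^ b ≤ 2 ^ (n+2) := by
      exact pow_le_pow_right₀ (by norm_num) hb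
    have : (2:ℝ) ^ (n+2) = 2 * 2 ^ (n+1) := by ring
    unfold L; unfold shellLam
    nlinarith [hk0.le, pow_pos (show (0:ℝ) < 2 by norm_num) (n+1)]
  have hcL : L / 4 ≤ shellLam k0 c := by
    have h2 : (2:ℝ) ^ (n+1) ≤ 2 ^ (c+2) := by
      exact pow_le_pow_right₀ (by norm_num) (by omega)
    have : (2:ℝ) ^ (c+2) = 4 * 2 ^ c := by ring
    unfold L; unfold shellLam
    nlinarith [hk0.le, pow_pos (show (0:ℝ) < 2 by norm_num) c]
  have hdL : L / 4 ≤ shellLam k0 d := by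
    have h2 : (2:ℝ) ^ (n+1) ≤ 2 ^ (d+2) := by
      exact pow_le_pow_right₀ (by norm_num) (by omega)
    have : (2:ℝ) ^ (d+2) = 4 * 2 ^ d := by ring
    unfold L; unfold shellLam
    nlinarith [hk0.le, pow_pos (show (0:ℝ) < 2 by norm_num) d]
  -- lower bounds for the rpow factors
  have key : ∀ (e : ℝ) (x : ℝ), 0 ≤ e → e ≤ 2 → L/4 ≤ x →
      L ^ e / 16 ≤ x ^ e := by
    intro e x he he2 hx
    have h4 : (4:ℝ) ^ e ≤ 16 := by
      calc (4:ℝ) ^ e ≤ 4 ^ (2:ℝ) := Real.rpow_le_rpow_of_exponent_le (by norm_num) he2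
        _ = 16 := by
          rw [show (2:ℝ) = ((2:ℕ):ℝ) by norm_num, Real.rpow_natCast]; norm_num
    have h4pos : (0:ℝ) < 4 ^ e := Real.rpow_pos_of_pos (by norm_num) e
    calc L ^ e / 16 ≤ L ^ e / 4 ^ e := by
          apply div_le_div_of_nonneg_left (Real.rpow_nonneg hL.le e) h4pos h4
      _ = (L/4) ^ e := (Real.div_rpow hL.le (by norm_num) e).symm
      _ ≤ x ^ e := Real.rpow_le_rpow (by positivity) hx he
  have hcpow := key (4*γ) _ (by linarith) (by linarith) hcL
  have hdpow := key (4*β) _ (by linarith) (by linarith) hdL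
  have hLHS : L ^ (-(4*α)) * shellLam k0 b ^ 2 ≤ 4 * L ^ (2 - 4*α) := by
    have h1 : shellLam k0 b ^ 2 ≤ (2*L)^2 := by
      apply pow_le_pow_left₀ (shellLam_pos hk0 b).le hbL
    have h2 : L ^ (-(4*α)) * (2*L)^2 = 4 * L ^ (2 - 4*α) := by
      have e1 : ((2:ℝ)*L)^2 = 4 * L ^ ((2:ℕ):ℝ) := by
        rw [Real.rpow_natCast]; ring
      rw [e1, show L ^ (-(4*α)) * (4 * L ^ ((2:ℕ):ℝ)) = 4 * (L ^ ((2:ℕ):ℝ) * L ^ (-(4*α))) by ring,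
        ← Real.rpow_add hL]
      norm_num [sub_eq_add_neg]
    calc L ^ (-(4*α)) * shellLam k0 b ^ 2 ≤ L ^ (-(4*α)) * (2*L)^2 := by
          apply mul_le_mul_of_nonneg_left h1 (Real.rpow_nonneg hL.le _)
      _ = 4 * L ^ (2-4*α) := h2
  have hRHS : 4 * L ^ (2 - 4*α) ≤ 1024 * (shellLam k0 c ^ (4*γ) * shellLam k0 d ^ (4*β)) := by
    have hsplit : L ^ (2-4*α) = L ^ (4*γ) * L ^ (4*β) := by
      rw [← Real.rpow_add hL]; congr 1; linarith
    have h1 : 0 ≤ L ^ (4*γ) := Real.rpow_nonneg hL.le _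
    have h2 : 0 ≤ L ^ (4*β) := Real.rpow_nonneg hL.le _
    calc 4 * L ^ (2-4*α) = 1024 * ((L ^ (4*γ)/16) * (L ^ (4*β)/16)) := by
          rw [hsplit]; ring
      _ ≤ 1024 * (shellLam k0 c ^ (4*γ) * shellLam k0 d ^ (4*β)) := by
          apply mul_le_mul_of_nonneg_left _ (by norm_num)
          apply mul_le_mul hcpow hdpow (div_nonneg h2 (by norm_num))
            (Real.rpow_nonneg (shellLam_pos hk0 c).le _)
  linarith

lemma six_sq (a b c d e f : ℝ) :
    (a + b + c + d + e + f) ^ 2 ≤ 6 * (a^2 + b^2 + c^2 + d^2 + e^2 + f^2) := by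
  nlinarith [sq_nonneg (a-b), sq_nonneg (a-c), sq_nonneg (a-d), sq_nonneg (a-e), sq_nonneg (a-f),
    sq_nonneg (b-c), sq_nonneg (b-d), sq_nonneg (b-e), sq_nonneg (b-f),
    sq_nonneg (c-d), sq_nonneg (c-e), sq_nonneg (c-f),
    sq_nonneg (d-e), sq_nonneg (d-f), sq_nonneg (e-f)]

noncomputable def wterm (k0 e : ℝ) (u : ℕ → ℂ) (m : ℕ) : ℝ :=
  shellLam k0 m ^ e * ‖u m‖ ^ 2

lemma wterm_nonneg {k0 : ℝ} (hk0 : 0 < k0) (e : ℝ) (u : ℕ → ℂ) (m : ℕ) :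
    0 ≤ wterm k0 e u m := by
  unfold wterm
  exact mul_nonneg (Real.rpow_nonneg (shellLam_pos hk0 m).le e) (by positivity)

lemma pointwise_bound {k0 α β γ : ℝ} (hk0 : 0 < k0) (hα : 0 ≤ α)
    (hβ0 : 0 ≤ β) (hβ2 : β ≤ 1/2) (hγ0 : 0 ≤ γ) (hγ2 : γ ≤ 1/2)
    (hbal : 4*γ + 4*β = 2 - 4*α) (u v : ℕ → ℂ) (n : ℕ) :
    shellLam k0 (n+1) ^ (-(4*α)) * ‖sabraB k0 u v (n+1)‖ ^ 2
      ≤ 8192 * (wterm k0 (4*γ) u (n+3) * wterm k0 (4*β) v (n+2)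
        + wterm k0 (4*γ) u (n+2) * wterm k0 (4*β) v (n+3)
        + wterm k0 (4*γ) u n * wterm k0 (4*β) v (n+2)
        + wterm k0 (4*γ) u (n+2) * wterm k0 (4*β) v n
        + wterm k0 (4*γ) u n * wterm k0 (4*β) v (n-1)
        + wterm k0 (4*γ) u (n-1) * wterm k0 (4*β) v n) := by
  set L := shellLam k0 (n+1) with hLdef
  have hL : 0 < L := shellLam_pos hk0 _
  set t1 : ℂ := (Complex.I / 3) * (shellLam k0 (n+2)) * (conj (v (n+2)) * u (n+3)) with ht1
  set t2 : ℂ := (Complex.I / 3) * (shellLam k0 (n+2)) * (2 * conj (u (n+2)) * v (n+3)) with ht2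
  set t3 : ℂ := (Complex.I / 3) * (shellLam k0 (n+1)) * (conj (u n) * v (n+2)) with ht3
  set t4 : ℂ := -((Complex.I / 3) * (shellLam k0 (n+1)) * (conj (v n) * u (n+2))) with ht4
  set t5 : ℂ := (Complex.I / 3) * (shellLam k0 n) * (2 * u n * v (n-1)) with ht5
  set t6 : ℂ := (Complex.I / 3) * (shellLam k0 n) * (u (n-1) * v n) with ht6
  have hsplit : sabraB k0 u v (n+1) = t1 + t2 + t3 + t4 + t5 + t6 := by
    rw [sabraB, ht1, ht2, ht3, ht4, ht5, ht6]
    have e1 : n + 1 + 1 = n + 2 := rfl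
    have e2 : n + 1 + 2 = n + 3 := rfl
    have e3 : n + 1 - 1 = n := rfl
    have e4 : n + 1 - 2 = n - 1 := rfl
    rw [e1, e2, e3, e4]
    ring
  -- norms of the six terms
  have habs : ∀ m : ℕ, ‖(Complex.I / 3 : ℂ) * (shellLam k0 m)‖ = 1/3 * shellLam k0 m := by
    intro m
    rw [norm_mul, norm_div, Complex.norm_I, Complex.norm_ofNat, Complex.norm_real,
      Real.norm_eq_abs, abs_of_pos (shellLam_pos hk0 m)]
  have n1 : ‖t1‖ = 1/3 * shellLam k0 (n+2) * (‖u (n+3)‖ * ‖v (n+2)‖) := by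
    rw [ht1, norm_mul, habs, norm_mul, RCLike.norm_conj]; ring
  have n2 : ‖t2‖ = 2/3 * shellLam k0 (n+2) * (‖u (n+2)‖ * ‖v (n+3)‖) := by
    rw [ht2, norm_mul, habs, norm_mul, norm_mul, RCLike.norm_conj, Complex.norm_ofNat]; ring
  have n3 : ‖t3‖ = 1/3 * shellLam k0 (n+1) * (‖u n‖ * ‖v (n+2)‖) := by
    rw [ht3, norm_mul, habs, norm_mul, RCLike.norm_conj]
  have n4 : ‖t4‖ = 1/3 * shellLam k0 (n+1) * (‖u (n+2)‖ * ‖v n‖) := by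
    rw [ht4, norm_neg, norm_mul, habs, norm_mul, RCLike.norm_conj]; ring
  have n5 : ‖t5‖ = 2/3 * shellLam k0 n * (‖u n‖ * ‖v (n-1)‖) := by
    rw [ht5, norm_mul, habs, norm_mul, norm_mul, Complex.norm_ofNat]; ring_nf
  have n6 : ‖t6‖ = 1/3 * shellLam k0 n * (‖u (n-1)‖ * ‖v n‖) := by
    rw [ht6, norm_mul, habs, norm_mul]
  -- generic per-term bound
  have per : ∀ (coef : ℝ) (b c d : ℕ), 0 ≤ coef → coef ≤ 2 → b ≤ n + 2 → n ≤ c + 1 → n ≤ d + 1 →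
      L ^ (-(4*α)) * (coef/3 * shellLam k0 b * (‖u c‖ * ‖v d‖)) ^ 2
        ≤ 4096/9 * (wterm k0 (4*γ) u c * wterm k0 (4*β) v d) := by
    intro coef b c d hc0 hc2 hbb hcc hdd
    have hcb := coeff_bound hk0 hα hβ0 hβ2 hγ0 hγ2 hbal n b c d hbb hcc hdd
    have hx2 : (0:ℝ) ≤ ‖u c‖ ^ 2 * ‖v d‖ ^ 2 := by positivity
    have hmul := mul_le_mul_of_nonneg_right hcb hx2
    have hcoefsq : coef ^ 2 ≤ 4 := by nlinarith
    have hnn : 0 ≤ L ^ (-(4*α)) * shellLam k0 b ^ 2 * (‖u c‖ ^ 2 * ‖v d‖ ^ 2) := by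
      have := Real.rpow_nonneg hL.le (-(4*α))
      have := (shellLam_pos hk0 b).le
      positivity
    unfold wterm
    nlinarith [hmul, hnn, hcoefsq]
  have k1 : L ^ (-(4*α)) * ‖t1‖ ^ 2 ≤ 4096/9 * (wterm k0 (4*γ) u (n+3) * wterm k0 (4*β) v (n+2)) := by
    rw [n1]; exact per 1 (n+2) (n+3) (n+2) (by norm_num) (by norm_num) (by omega) (by omega) (by omega)
  have k2 : L ^ (-(4*α)) * ‖t2‖ ^ 2 ≤ 4096/9 * (wterm k0 (4*γ) u (n+2) * wterm k0 (4*β) v (n+3)) := by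
    rw [n2]; exact per 2 (n+2) (n+2) (n+3) (by norm_num) (by norm_num) (by omega) (by omega) (by omega)
  have k3 : L ^ (-(4*α)) * ‖t3‖ ^ 2 ≤ 4096/9 * (wterm k0 (4*γ) u n * wterm k0 (4*β) v (n+2)) := by
    rw [n3]; exact per 1 (n+1) n (n+2) (by norm_num) (by norm_num) (by omega) (by omega) (by omega)
  have k4 : L ^ (-(4*α)) * ‖t4‖ ^ 2 ≤ 4096/9 * (wterm k0 (4*γ) u (n+2) * wterm k0 (4*β) v n) := by
    rw [n4]; exact per 1 (n+1) (n+2) n (by norm_num) (by norm_num) (by omega) (by omega) (by omega)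
  have k5 : L ^ (-(4*α)) * ‖t5‖ ^ 2 ≤ 4096/9 * (wterm k0 (4*γ) u n * wterm k0 (4*β) v (n-1)) := by
    rw [n5]; exact per 2 n n (n-1) (by norm_num) (by norm_num) (by omega) (by omega) (by omega)
  have k6 : L ^ (-(4*α)) * ‖t6‖ ^ 2 ≤ 4096/9 * (wterm k0 (4*γ) u (n-1) * wterm k0 (4*β) v n) := by
    rw [n6]; exact per 1 n (n-1) n (by norm_num) (by norm_num) (by omega) (by omega) (by omega)
  -- assemble
  have hb : ‖sabraB k0 u v (n+1)‖ ≤ ‖t1‖ + ‖t2‖ + ‖t3‖ + ‖t4‖ + ‖t5‖ + ‖t6‖ := by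
    rw [hsplit]
    have h1 := norm_add_le (t1+t2+t3+t4+t5) t6
    have h2 := norm_add_le (t1+t2+t3+t4) t5
    have h3 := norm_add_le (t1+t2+t3) t4
    have h4 := norm_add_le (t1+t2) t3
    have h5 := norm_add_le t1 t2
    linarith
  have hsq : ‖sabraB k0 u v (n+1)‖ ^ 2 ≤ (‖t1‖ + ‖t2‖ + ‖t3‖ + ‖t4‖ + ‖t5‖ + ‖t6‖) ^ 2 :=
    pow_le_pow_left₀ (norm_nonneg _) hb 2
  have hexp : (‖t1‖ + ‖t2‖ + ‖t3‖ + ‖t4‖ + ‖t5‖ + ‖t6‖) ^ 2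
      ≤ 6 * (‖t1‖^2 + ‖t2‖^2 + ‖t3‖^2 + ‖t4‖^2 + ‖t5‖^2 + ‖t6‖^2) :=
    six_sq _ _ _ _ _ _
  have hLnn : 0 ≤ L ^ (-(4*α)) := Real.rpow_nonneg hL.le _
  have hP1 := mul_nonneg (wterm_nonneg hk0 (4*γ) u (n+3)) (wterm_nonneg hk0 (4*β) v (n+2))
  have hP2 := mul_nonneg (wterm_nonneg hk0 (4*γ) u (n+2)) (wterm_nonneg hk0 (4*β) v (n+3))
  have hP3 := mul_nonneg (wterm_nonneg hk0 (4*γ) u n) (wterm_nonneg hk0 (4*β) v (n+2))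
  have hP4 := mul_nonneg (wterm_nonneg hk0 (4*γ) u (n+2)) (wterm_nonneg hk0 (4*β) v n)
  have hP5 := mul_nonneg (wterm_nonneg hk0 (4*γ) u n) (wterm_nonneg hk0 (4*β) v (n-1))
  have hP6 := mul_nonneg (wterm_nonneg hk0 (4*γ) u (n-1)) (wterm_nonneg hk0 (4*β) v n)
  have step : L ^ (-(4*α)) * ‖sabraB k0 u v (n+1)‖ ^ 2
      ≤ 6 * (L ^ (-(4*α)) * ‖t1‖^2 + L ^ (-(4*α)) * ‖t2‖^2 + L ^ (-(4*α)) * ‖t3‖^2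
        + L ^ (-(4*α)) * ‖t4‖^2 + L ^ (-(4*α)) * ‖t5‖^2 + L ^ (-(4*α)) * ‖t6‖^2) := by
    have := mul_le_mul_of_nonneg_left (hsq.trans hexp) hLnn
    linarith
  calc L ^ (-(4*α)) * ‖sabraB k0 u v (n+1)‖ ^ 2
      ≤ 6 * (L ^ (-(4*α)) * ‖t1‖^2 + L ^ (-(4*α)) * ‖t2‖^2 + L ^ (-(4*α)) * ‖t3‖^2
        + L ^ (-(4*α)) * ‖t4‖^2 + L ^ (-(4*α)) * ‖t5‖^2 + L ^ (-(4*α)) * ‖t6‖^2) := step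
    _ ≤ 8192 * (wterm k0 (4*γ) u (n+3) * wterm k0 (4*β) v (n+2)
        + wterm k0 (4*γ) u (n+2) * wterm k0 (4*β) v (n+3)
        + wterm k0 (4*γ) u n * wterm k0 (4*β) v (n+2)
        + wterm k0 (4*γ) u (n+2) * wterm k0 (4*β) v n
        + wterm k0 (4*γ) u n * wterm k0 (4*β) v (n-1)
        + wterm k0 (4*γ) u (n-1) * wterm k0 (4*β) v n) := by
      linarith

/-- Continuity of the Sabra shell-model bilinear map `B`:
for all `α, β ≥ 0` with `α + β ∈ (0, 1/2]` there is `C > 0` with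
`‖B(u,v)‖_{-α} ≤ C ‖u‖_{1/2-(α+β)} ‖v‖_β`, where `‖w‖_γ² = ∑_{n ≥ 1} λ_n^{4γ} |w_n|²`. -/
theorem stmt3 (k0 : ℝ) (hk0 : 0 < k0) (α β : ℝ) (hα : 0 ≤ α) (hβ : 0 ≤ β)
    (hsum : 0 < α + β) (hsum' : α + β ≤ 1 / 2) :
    ∃ C > (0 : ℝ), ∀ u v : ℕ → ℂ, u 0 = 0 → v 0 = 0 →
      Summable (fun n : ℕ =>
        (shellLam k0 (n + 1)) ^ (4 * (1 / 2 - (α + β))) * ‖u (n + 1)‖ ^ 2) →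
      Summable (fun n : ℕ => (shellLam k0 (n + 1)) ^ (4 * β) * ‖v (n + 1)‖ ^ 2) →
      Real.sqrt (∑' n : ℕ, (shellLam k0 (n + 1)) ^ (4 * (-α)) * ‖sabraB k0 u v (n + 1)‖ ^ 2)
        ≤ C * Real.sqrt (∑' n : ℕ,
              (shellLam k0 (n + 1)) ^ (4 * (1 / 2 - (α + β))) * ‖u (n + 1)‖ ^ 2)
            * Real.sqrt (∑' n : ℕ,
              (shellLam k0 (n + 1)) ^ (4 * β) * ‖v (n + 1)‖ ^ 2) := by
  refine ⟨512, by norm_num, ?_⟩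
  intro u v hu0 hv0 hu hv
  set γ : ℝ := 1 / 2 - (α + β) with hγdef
  have hγ0 : 0 ≤ γ := by rw [hγdef]; linarith
  have hγ2 : γ ≤ 1/2 := by rw [hγdef]; linarith
  have hβ2 : β ≤ 1/2 := by linarith
  have hbal : 4*γ + 4*β = 2 - 4*α := by rw [hγdef]; ring
  -- notation
  set f : ℕ → ℝ := wterm k0 (4*γ) u with hfdef
  set g : ℕ → ℝ := wterm k0 (4*β) v with hgdef
  have hf_nonneg : ∀ m, 0 ≤ f m := fun m => wterm_nonneg hk0 _ u m
  have hg_nonneg : ∀ m, 0 ≤ g m := fun m => wterm_nonneg hk0 _ v m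
  have hf_sum : Summable (fun n => f (n+1)) := hu
  have hg_sum : Summable (fun n => g (n+1)) := hv
  have hf0 : f 0 = 0 := by simp [hfdef, wterm, hu0]
  have hg0 : g 0 = 0 := by simp [hgdef, wterm, hv0]
  have hgS : Summable g := (summable_nat_add_iff 1).mp hg_sum
  set A : ℝ := ∑' n : ℕ, f (n+1) with hAdef
  set B : ℝ := ∑' n : ℕ, g (n+1) with hBdef
  have hA0 : 0 ≤ A := tsum_nonneg fun n => hf_nonneg _
  have hB0 : 0 ≤ B := tsum_nonneg fun n => hg_nonneg _
  have hfA : ∀ m, f m ≤ A := by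
    intro m
    match m with
    | 0 => rw [hf0]; exact hA0
    | (m+1) => exact Summable.le_tsum hf_sum m fun j _ => hf_nonneg _
  set T : ℝ := ∑' n : ℕ, g n with hTdef
  have hTB : T = B := by
    rw [hTdef, Summable.tsum_eq_zero_add hgS, hg0, zero_add]
  have hs2 : Summable (fun n : ℕ => g (n+2)) := (summable_nat_add_iff 2).mpr hgS
  have hs3 : Summable (fun n : ℕ => g (n+3)) := (summable_nat_add_iff 3).mpr hgS
  have hsm1 : Summable (fun n : ℕ => g (n-1)) := by
    apply (summable_nat_add_iff 1).mp
    exact hgS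
  have h1T : ∑' n : ℕ, g (n+1) ≤ T := by
    rw [hTdef, Summable.tsum_eq_zero_add hgS]
    exact le_add_of_nonneg_left (hg_nonneg 0)
  have h2T : ∑' n : ℕ, g (n+2) ≤ T := by
    refine le_trans ?_ h1T
    rw [Summable.tsum_eq_zero_add hg_sum]
    exact le_add_of_nonneg_left (hg_nonneg 1)
  have h3T : ∑' n : ℕ, g (n+3) ≤ T := by
    refine le_trans ?_ h2T
    rw [Summable.tsum_eq_zero_add hs2]
    exact le_add_of_nonneg_left (hg_nonneg 2)
  have hm1T : ∑' n : ℕ, g (n-1) ≤ T := by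
    rw [Summable.tsum_eq_zero_add hsm1, hg0, zero_add]
    exact le_of_eq rfl
  -- pointwise bound in summed form
  have hFle : ∀ n : ℕ, shellLam k0 (n+1) ^ (-(4*α)) * ‖sabraB k0 u v (n+1)‖ ^ 2
      ≤ 8192 * A * (g (n+3) + g (n+2) + g (n+2) + g n + g (n-1) + g n) := by
    intro n
    have hpw := pointwise_bound hk0 hα hβ hβ2 hγ0 hγ2 hbal u v n
    rw [← hfdef, ← hgdef] at hpw
    have b1 := mul_le_mul_of_nonneg_right (hfA (n+3)) (hg_nonneg (n+2))
    have b2 := mul_le_mul_of_nonneg_right (hfA (n+2)) (hg_nonneg (n+3))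
    have b3 := mul_le_mul_of_nonneg_right (hfA n) (hg_nonneg (n+2))
    have b4 := mul_le_mul_of_nonneg_right (hfA (n+2)) (hg_nonneg n)
    have b5 := mul_le_mul_of_nonneg_right (hfA n) (hg_nonneg (n-1))
    have b6 := mul_le_mul_of_nonneg_right (hfA (n-1)) (hg_nonneg n)
    nlinarith [hpw, b1, b2, b3, b4, b5, b6]
  have hGsum : Summable (fun n : ℕ =>
      8192 * A * (g (n+3) + g (n+2) + g (n+2) + g n + g (n-1) + g n)) := by
    apply Summable.mul_left
    exact ((((hs3.add hs2).add hs2).add hgS).add hsm1).add hgS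
  have hFnonneg : ∀ n : ℕ, 0 ≤ shellLam k0 (n+1) ^ (-(4*α)) * ‖sabraB k0 u v (n+1)‖ ^ 2 :=
    fun n => mul_nonneg (Real.rpow_nonneg (shellLam_pos hk0 _).le _) (by positivity)
  have hFsum : Summable (fun n : ℕ =>
      shellLam k0 (n+1) ^ (-(4*α)) * ‖sabraB k0 u v (n+1)‖ ^ 2) :=
    Summable.of_nonneg_of_le hFnonneg hFle hGsum
  have hkey : (∑' n : ℕ, shellLam k0 (n+1) ^ (-(4*α)) * ‖sabraB k0 u v (n+1)‖ ^ 2)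
      ≤ 262144 * (A * B) := by
    have step1 := Summable.tsum_le_tsum hFle hFsum hGsum
    have step2 : (∑' n : ℕ, 8192 * A * (g (n+3) + g (n+2) + g (n+2) + g n + g (n-1) + g n))
        = 8192 * A * (∑' n : ℕ, (g (n+3) + g (n+2) + g (n+2) + g n + g (n-1) + g n)) :=
      tsum_mul_left
    have step3 : (∑' n : ℕ, (g (n+3) + g (n+2) + g (n+2) + g n + g (n-1) + g n))
        = (∑' n : ℕ, g (n+3)) + (∑' n : ℕ, g (n+2)) + (∑' n : ℕ, g (n+2))
          + (∑' n : ℕ, g n) + (∑' n : ℕ, g (n-1)) + (∑' n : ℕ, g n) := by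
      rw [Summable.tsum_add (((((hs3.add hs2).add hs2).add hgS).add hsm1)) hgS,
        Summable.tsum_add ((((hs3.add hs2).add hs2).add hgS)) hsm1,
        Summable.tsum_add (((hs3.add hs2).add hs2)) hgS,
        Summable.tsum_add ((hs3.add hs2)) hs2,
        Summable.tsum_add hs3 hs2]
    have hsum6 : (∑' n : ℕ, (g (n+3) + g (n+2) + g (n+2) + g n + g (n-1) + g n)) ≤ 6 * B := by
      rw [step3]
      have := hTB
      linarith [h3T, h2T, hm1T, le_of_eq (rfl : T = T)]
    calc (∑' n : ℕ, shellLam k0 (n+1) ^ (-(4*α)) * ‖sabraB k0 u v (n+1)‖ ^ 2)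
        ≤ 8192 * A * (∑' n : ℕ, (g (n+3) + g (n+2) + g (n+2) + g n + g (n-1) + g n)) := by
          rw [← step2]; exact step1
      _ ≤ 8192 * A * (6 * B) := by
          apply mul_le_mul_of_nonneg_left hsum6 (by positivity)
      _ ≤ 262144 * (A * B) := by nlinarith [mul_nonneg hA0 hB0]
  -- conclude with square roots
  have hexp : (4:ℝ) * (-α) = -(4*α) := by ring
  simp only [hexp]
  calc Real.sqrt (∑' n : ℕ, shellLam k0 (n+1) ^ (-(4*α)) * ‖sabraB k0 u v (n+1)‖ ^ 2)
      ≤ Real.sqrt (262144 * (A * B)) := Real.sqrt_le_sqrt hkey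
    _ = 512 * Real.sqrt A * Real.sqrt B := by
        rw [show (262144:ℝ) = 512^2 by norm_num, Real.sqrt_mul (by positivity) (A*B),
          Real.sqrt_sq (by norm_num : (0:ℝ) ≤ 512), Real.sqrt_mul hA0, mul_assoc]
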